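/- arXiv:1802.00251 — 2 statements merged into one kernel-verified Lean document; each statement's English description precedes it below -/
import Mathlib

section
/- Let G be a connected {P6, C5, K_{1,3}}-free graph containing an induced 6-cycle with vertex set N0. Then every vertex of G is at distance at most 1 from N0. -/
/-!
Let `N` be the closed neighbourhood of the induced hexagon `C = v(ℤ/6)`; it suffices that `N` is
closed under adjacency, as `G` is connected. Suppose `y ∈ N \ C` has a neighbour `x ∉ N`. Two
cycle neighbours of `y` that are not consecutive on `C` would form a claw with `x` at `y`, so there
is a `j` with `y ∼ v j` but `y ≁ v (j+1), v (j+2), v (j+3)`, and then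
`x, y, v j, v (j+1), v (j+2), v (j+3)` is an induced `P₆`.
-/

open SimpleGraph Finset

/-- `G` contains an induced copy of `H`. -/
def HasInducedCopy {V W : Type*} (G : SimpleGraph V) (H : SimpleGraph W) : Prop :=
  ∃ f : W ↪ V, ∀ a b, G.Adj (f a) (f b) ↔ H.Adj a b

/-- The cycle on `ZMod n` (for `n ≥ 3`). -/
def cyc (n : ℕ) : SimpleGraph (ZMod n) where
  Adj i j := i ≠ j ∧ (i = j + 1 ∨ j = i + 1)
  symm := ⟨fun i j h => ⟨h.1.symm, h.2.symm⟩⟩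
  loopless := ⟨fun i h => h.1 rfl⟩

/-- Kite: diamond (K4 minus an edge) plus a pendant vertex adjacent to a degree-3 vertex. -/
def kite : SimpleGraph (Fin 5) :=
  SimpleGraph.fromEdgeSet {s(0,1), s(0,2), s(1,2), s(1,3), s(2,3), s(1,4)}

/-- Bull: triangle with two pendant edges at distinct vertices. -/
def bull : SimpleGraph (Fin 5) :=
  SimpleGraph.fromEdgeSet {s(0,1), s(0,2), s(1,2), s(0,3), s(1,4)}

/-- Independent expansion of the cycle `C_n`. -/
def indExp (n : ℕ) (m : ZMod n → ℕ) : SimpleGraph (Σ i : ZMod n, Fin (m i)) where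
  Adj x y := x.1 ≠ y.1 ∧ (x.1 = y.1 + 1 ∨ y.1 = x.1 + 1)
  symm := ⟨fun x y h => ⟨h.1.symm, h.2.symm⟩⟩
  loopless := ⟨fun x h => h.1 rfl⟩

/-- Complete expansion of the cycle `C_n`. -/
def compExp (n : ℕ) (m : ZMod n → ℕ) : SimpleGraph (Σ i : ZMod n, Fin (m i)) where
  Adj x y := (x.1 = y.1 ∧ x ≠ y) ∨ (x.1 ≠ y.1 ∧ (x.1 = y.1 + 1 ∨ y.1 = x.1 + 1))
  symm := by
    constructor
    rintro x y (⟨h, hne⟩ | ⟨h, h2⟩)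
    · exact Or.inl ⟨h.symm, hne.symm⟩
    · exact Or.inr ⟨h.symm, h2.symm⟩
  loopless := by constructor; rintro x (⟨_, hne⟩ | ⟨h, _⟩); exacts [hne rfl, h rfl]

/-- Distance from a vertex to a set of vertices. -/
noncomputable def distToSet {V : Type*} (G : SimpleGraph V) (S : Set V) (x : V) : ℕ :=
  sInf ((fun y => G.dist x y) '' S)


lemma ZMod.natCast_eq_natCast_iff_of_lt {n a b : ℕ} (ha : a < n) (hb : b < n) :
    (a : ZMod n) = b ↔ a = b := by
  rw [ZMod.natCast_eq_natCast_iff', Nat.mod_eq_of_lt ha, Nat.mod_eq_of_lt hb]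

def cycAddLeft (n : ℕ) (j : ZMod n) : cyc n ≃g cyc n where
  toEquiv := Equiv.addLeft j
  map_rel_iff' := by simp [cyc, add_assoc]

def pathGraphEmbeddingCyc {m n : ℕ} (hmn : m < n) : pathGraph m ↪g cyc n where
  toFun i := (i.val : ZMod n)
  inj' i j h := Fin.ext ((ZMod.natCast_eq_natCast_iff_of_lt (by omega) (by omega)).1 h)
  map_rel_iff' {i j} := by
    show (i.val : ZMod n) ≠ j.val ∧ ((i.val : ZMod n) = j.val + 1 ∨ (j.val : ZMod n) = i.val + 1) ↔
      (pathGraph m).Adj i j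
    have := i.2
    have := j.2
    simp (disch := omega) only [← Nat.cast_succ, ne_eq, ZMod.natCast_eq_natCast_iff_of_lt,
      pathGraph_adj]
    omega

lemma exists_isolated_of_pairwise_cyc_adj {S : ZMod 6 → Prop} {i : ZMod 6} (hi : S i)
    (hS : ∀ a b, S a → S b → a ≠ b → (cyc 6).Adj a b) :
    ∃ j, ∀ k : Fin 4, S (j + k.val) ↔ k = 0 := by
  have hfar (d : ZMod 6) (h0 : d ≠ 0) (h1 : d ≠ 1) (h2 : d ≠ -1) : ¬ S (i + d) := fun hd => by
    have := hS i (i + d) hi hd (by simpa using h0)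
    rw [Ne, eq_neg_iff_add_eq_zero] at h2
    simp only [cyc, ne_eq, left_eq_add, add_assoc, add_right_inj] at this
    tauto
  by_cases h : S (i + 1)
  · refine ⟨i + 1, fun k => ?_⟩
    fin_cases k
    · simpa using h
    all_goals
      exact iff_of_false (by rw [add_assoc]; exact hfar _ (by decide) (by decide) (by decide))
        (by decide)
  · refine ⟨i, fun k => ?_⟩
    fin_cases k
    · simpa using hi
    · simpa using h
    all_goals exact iff_of_false (hfar _ (by decide) (by decide) (by decide)) (by decide)

namespace SimpleGraph

variable {V W : Type*} {G : SimpleGraph V}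

lemma hasInducedCopy_of_embedding {H : SimpleGraph W} (f : H ↪g G) : HasInducedCopy G H :=
  ⟨f.toEmbedding, fun _ _ => f.map_adj_iff⟩

lemma hasInducedCopy_claw {c : V} {a : Fin 3 → V} (ha : Function.Injective a)
    (hc : ∀ k, G.Adj c (a k)) (hind : ∀ k l, ¬ G.Adj (a k) (a l)) :
    HasInducedCopy G (completeBipartiteGraph (Fin 1) (Fin 3)) := by
  refine ⟨⟨Sum.elim (fun _ => c) a, Sum.elim_injective.2
    ⟨Function.injective_of_subsingleton _, ha, fun _ k => (hc k).ne⟩⟩, ?_⟩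
  rintro (_ | k) (_ | l) <;> simp [hc, hind, G.adj_comm _ c]

def Embedding.pathGraphCons {n : ℕ} (f : pathGraph (n + 1) ↪g G) (u : V)
    (hadj : ∀ i, G.Adj u (f i) ↔ i = 0) (hne : ∀ i, u ≠ f i) : pathGraph (n + 2) ↪g G where
  toFun := Fin.cons u f
  inj' := Fin.cons_injective_iff.2 ⟨by rintro ⟨i, rfl⟩; exact hne i rfl, f.injective⟩
  map_rel_iff' {i j} := by
    simp only [Function.Embedding.coeFn_mk, pathGraph_adj]
    induction i using Fin.cases <;> induction j using Fin.cases
    · simp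
    · rw [Fin.cons_zero, Fin.cons_succ, hadj, Fin.ext_iff, Fin.val_succ, Fin.val_zero, Fin.val_zero]
      omega
    · rw [Fin.cons_zero, Fin.cons_succ, G.adj_comm, hadj, Fin.ext_iff, Fin.val_succ, Fin.val_zero,
        Fin.val_zero]
      omega
    · simp [pathGraph_adj]

lemma Walk.mem_of_adj_closed {s : Set V} (hs : ∀ ⦃x y⦄, G.Adj x y → y ∈ s → x ∈ s)
    {u w : V} (p : G.Walk u w) (hw : w ∈ s) : u ∈ s := by
  induction p with
  | nil => exact hw
  | cons h _ ih => exact hs h (ih hw)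

lemma exists_eq_or_adj_of_adj_of_adj (hP6 : ¬ HasInducedCopy G (pathGraph 6))
    (hClaw : ¬ HasInducedCopy G (completeBipartiteGraph (Fin 1) (Fin 3)))
    (f : cyc 6 ↪g G) {x y : V} (hxy : G.Adj x y) {i : ZMod 6} (hy : G.Adj y (f i)) :
    ∃ k, x = f k ∨ G.Adj x (f k) := by
  by_contra! hx
  have hyC : ∀ k, y ≠ f k := fun k e => (hx k).2 (e ▸ hxy)
  have hS : ∀ a b, G.Adj y (f a) → G.Adj y (f b) → a ≠ b → (cyc 6).Adj a b := by
    intro a b ha hb hab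
    by_contra hn
    refine hClaw (hasInducedCopy_claw (c := y) (a := ![x, f a, f b]) ?_ ?_ ?_)
    · intro k l
      fin_cases k <;> fin_cases l <;> simp [(hx _).1, ((hx _).1).symm, hab, hab.symm]
    · intro k
      fin_cases k <;> simp [hxy.symm, ha, hb]
    · intro k l
      fin_cases k <;> fin_cases l <;> simp [(hx _).2, G.adj_comm _ x, hn, mt (cyc 6).adj_symm hn]
  obtain ⟨j, hj⟩ := exists_isolated_of_pairwise_cyc_adj hy hS
  let p₄ : pathGraph 4 ↪g G :=
    f.comp ((cycAddLeft 6 j).toEmbedding.comp (pathGraphEmbeddingCyc (by norm_num)))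
  let p₅ := p₄.pathGraphCons y hj fun _ => hyC _
  exact hP6 (hasInducedCopy_of_embedding (p₅.pathGraphCons x
    (Fin.cases (iff_of_true hxy rfl) fun k => iff_of_false (hx _).2 k.succ_ne_zero)
    (Fin.cases hxy.ne fun _ => (hx _).1)))

end SimpleGraph

theorem stmt_8_general {V : Type*} (G : SimpleGraph V) (hconn : G.Connected)
    (hP6 : ¬ HasInducedCopy G (pathGraph 6))
    (hClaw : ¬ HasInducedCopy G (completeBipartiteGraph (Fin 1) (Fin 3)))
    (v : ZMod 6 → V) (hinj : Function.Injective v)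
    (hC : ∀ i j, G.Adj (v i) (v j) ↔ (cyc 6).Adj i j) :
    ∀ x : V, ∃ i : ZMod 6, G.dist x (v i) ≤ 1 := by
  let f : cyc 6 ↪g G := ⟨⟨v, hinj⟩, hC _ _⟩
  let N : Set V := {z | ∃ k, z = f k ∨ G.Adj z (f k)}
  have hN : ∀ ⦃x y⦄, G.Adj x y → y ∈ N → x ∈ N := by
    rintro x y hxy ⟨k, rfl | hy⟩
    · exact ⟨k, Or.inr hxy⟩
    · exact exists_eq_or_adj_of_adj_of_adj hP6 hClaw f hxy hy
  intro x
  obtain ⟨k, rfl | hk⟩ : x ∈ N :=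
    (hconn.preconnected x (v 0)).some.mem_of_adj_closed hN ⟨0, Or.inl rfl⟩
  · exact ⟨k, by simp [f]⟩
  · exact ⟨k, (dist_eq_one_iff_adj.2 hk).le⟩

theorem stmt_8 {V : Type*} [Fintype V] (G : SimpleGraph V) (hconn : G.Connected)
    (hP6 : ¬ HasInducedCopy G (pathGraph 6))
    (hC5 : ¬ HasInducedCopy G (cyc 5))
    (hClaw : ¬ HasInducedCopy G (completeBipartiteGraph (Fin 1) (Fin 3)))
    (v : ZMod 6 → V) (hinj : Function.Injective v)
    (hC : ∀ i j, G.Adj (v i) (v j) ↔ (cyc 6).Adj i j) :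
    ∀ x : V, ∃ i : ZMod 6, G.dist x (v i) ≤ 1 :=
  stmt_8_general G hconn hP6 hClaw v hinj hC
end

section
/- If G is a connected {P6, C5, P5-complement, K_{1,3}}-free graph that contains an induced C6, then G is isomorphic to a complete expansion of C6, i.e., G ≅ K[C6](m1,...,m6) for some positive integers m_i. -/
open SimpleGraph Finset

/-!
Fix an induced hexagon `f`. Call `v` a clone of the hexagon vertex `i` if the closed
neighbourhood of `v` on the hexagon is `{i - 1, i, i + 1}`. For a vertex off the hexagon with a
neighbour on it, each forbidden graph rules out some neighbourhood patterns, and a finite check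
over the 64 subsets of `ZMod 6` shows that only these triples survive. A vertex adjacent to a
clone but to no hexagon vertex would start an induced `P₆`, so by connectivity every vertex is a
clone. Finally, clones of `i` and `i + d` are adjacent for `d = 0` (else a claw) and `d = 1`
(else a `P₆`) and non-adjacent for `d = 2` (else a `C₅`) and `d = 3` (else a claw centred at one
of them), so grouping the vertices by the index they clone gives `K[C₆](m)`.
-/

instance cyc.adjDecidable (n : ℕ) : DecidableRel (cyc n).Adj := fun a b =>
  inferInstanceAs (Decidable (a ≠ b ∧ (a = b + 1 ∨ b = a + 1)))

instance pathGraph.adjDecidable (n : ℕ) : DecidableRel (pathGraph n).Adj := fun _ _ =>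
  decidable_of_iff _ pathGraph_adj.symm

section InducedCopy

variable {V W : Type*} {G : SimpleGraph V} {H : SimpleGraph W}

theorem neighborSet_injective_of_forall
    (hH : ∀ a b, (∀ c, H.Adj a c ↔ H.Adj b c) → a = b) : Function.Injective H.neighborSet :=
  fun a b hab => hH a b fun c => Set.ext_iff.mp hab c

theorem injective_of_adj_iff (hH : Function.Injective H.neighborSet) {f : W → V}
    (hf : ∀ a b, G.Adj (f a) (f b) ↔ H.Adj a b) : Function.Injective f :=
  fun a b hab => hH <| Set.ext fun c => by
    simp only [mem_neighborSet, ← hf, hab]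

theorem hasInducedCopy_of_injective (f : W → V) (hinj : Function.Injective f)
    (hf : ∀ a b, G.Adj (f a) (f b) ↔ H.Adj a b) : HasInducedCopy G H :=
  ⟨⟨f, hinj⟩, hf⟩

theorem hasInducedCopy_of_adj_iff (hH : Function.Injective H.neighborSet) (f : W → V)
    (hf : ∀ a b, G.Adj (f a) (f b) ↔ H.Adj a b) : HasInducedCopy G H :=
  hasInducedCopy_of_injective f (injective_of_adj_iff hH hf) hf

theorem hasInducedCopy_claw {x a b c : V} (hab : a ≠ b) (hac : a ≠ c) (hbc : b ≠ c)
    (hxa : G.Adj x a) (hxb : G.Adj x b) (hxc : G.Adj x c)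
    (nab : ¬G.Adj a b) (nac : ¬G.Adj a c) (nbc : ¬G.Adj b c) :
    HasInducedCopy G (completeBipartiteGraph (Fin 1) (Fin 3)) := by
  refine hasInducedCopy_of_injective (Sum.elim (fun _ => x) ![a, b, c]) (fun p q h => ?_)
    fun p q => ?_ <;>
  fin_cases p <;> fin_cases q <;>
    simp_all [hxa.ne, hxb.ne, hxc.ne, hxa.ne', hxb.ne', hxc.ne', G.adj_comm]

theorem pathGraph_six_neighborSet_injective : Function.Injective (pathGraph 6).neighborSet :=
  neighborSet_injective_of_forall (by decide)

theorem compl_pathGraph_five_neighborSet_injective :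
    Function.Injective (pathGraph 5)ᶜ.neighborSet :=
  neighborSet_injective_of_forall (by decide)

theorem cyc_five_neighborSet_injective : Function.Injective (cyc 5).neighborSet :=
  neighborSet_injective_of_forall (by decide)

theorem cyc_six_neighborSet_injective : Function.Injective (cyc 6).neighborSet :=
  neighborSet_injective_of_forall (by decide)

end InducedCopy

section Clones

variable {V : Type*} {G : SimpleGraph V} {n : ℕ}

theorem cyc_adj_add_left (c a b : ZMod n) : (cyc n).Adj (c + a) (c + b) ↔ (cyc n).Adj a b := by
  simp only [cyc, ne_eq, add_right_inj, add_assoc]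

def IsInducedCycle (G : SimpleGraph V) (f : ZMod n → V) : Prop :=
  ∀ a b, G.Adj (f a) (f b) ↔ (cyc n).Adj a b

/-- In `K[C_n](m)` the `i`-th clique consists exactly of the clones of `i`. -/
def IsCycClone (G : SimpleGraph V) (f : ZMod n → V) (v : V) (i : ZMod n) : Prop :=
  ∀ j, v = f j ∨ G.Adj v (f j) ↔ i = j ∨ (cyc n).Adj i j

theorem IsInducedCycle.adj_iff {f : ZMod n → V} (hf : IsInducedCycle G f) {a b : ZMod n} :
    G.Adj (f a) (f b) ↔ (cyc n).Adj a b :=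
  hf a b

theorem IsInducedCycle.rotate {f : ZMod n → V} (hf : IsInducedCycle G f) (c : ZMod n) :
    IsInducedCycle G (fun k => f (c + k)) :=
  fun a b => (hf _ _).trans (cyc_adj_add_left c a b)

theorem IsInducedCycle.isCycClone_self {f : ZMod 6 → V} (hf : IsInducedCycle G f)
    (i : ZMod 6) : IsCycClone G f (f i) i := fun j => by
  rw [(injective_of_adj_iff cyc_six_neighborSet_injective hf).eq_iff, hf.adj_iff]

namespace IsCycClone

variable {f : ZMod n → V} {v : V} {i j : ZMod n}

theorem rotate {c : ZMod n} (h : IsCycClone G f v (c + i)) :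
    IsCycClone G (fun k => f (c + k)) v i := fun k => by
  rw [h (c + k), add_right_inj, cyc_adj_add_left]

theorem ne (h : IsCycClone G f v i) (hij : ¬(i = j ∨ (cyc n).Adj i j)) : v ≠ f j :=
  fun hv => hij ((h j).mp (Or.inl hv))

theorem not_adj (h : IsCycClone G f v i) (hij : ¬(i = j ∨ (cyc n).Adj i j)) :
    ¬G.Adj v (f j) :=
  fun hv => hij ((h j).mp (Or.inr hv))

theorem adj_iff_of_ne {f : ZMod 6 → V} {i j : ZMod 6} (hf : IsInducedCycle G f)
    (h : IsCycClone G f v i) (hij : i ≠ j) : G.Adj v (f j) ↔ (cyc 6).Adj i j := by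
  refine ⟨fun hv => ((h j).mp (Or.inr hv)).resolve_left hij, fun hadj => ?_⟩
  refine ((h j).mpr (Or.inr hadj)).resolve_left fun hv => ?_
  -- `f (2j - i)` is the neighbour of `f j` on the far side from `f i`.
  have far : ∀ i j : ZMod 6, (cyc 6).Adj i j →
      (cyc 6).Adj j (2 * j - i) ∧ ¬(i = 2 * j - i ∨ (cyc 6).Adj i (2 * j - i)) := by
    decide
  exact (far i j hadj).2 ((h _).mp (Or.inr (hv ▸ hf.adj_iff.mpr (far i j hadj).1)))

theorem adj {f : ZMod 6 → V} {i j : ZMod 6} (hf : IsInducedCycle G f) (h : IsCycClone G f v i)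
    (hij : (cyc 6).Adj i j) : G.Adj v (f j) :=
  (h.adj_iff_of_ne hf hij.ne).mpr hij

theorem unique {f : ZMod 6 → V} {i i' : ZMod 6} (h : IsCycClone G f v i)
    (h' : IsCycClone G f v i') : i = i' := by
  have key : ∀ i i' : ZMod 6,
      (∀ j, i = j ∨ (cyc 6).Adj i j ↔ i' = j ∨ (cyc 6).Adj i' j) → i = i' := by
    decide
  exact key i i' fun j => (h j).symm.trans (h' j)

end IsCycClone

end Clones

set_option synthInstance.maxSize 1024 in
/-- For `S` the hexagon neighbours of an outside vertex, `h₁`, ..., `h₅` exclude in turn a claw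
centred on the hexagon, a claw centred at the vertex, an induced `P₆`, a `C₅` and a house. -/
theorem exists_mem_iff_cyc_six_of_forall (S : Finset (ZMod 6)) (hS : S.Nonempty)
    (h₁ : ∀ c ∈ S, c + 1 ∈ S ∨ c + 5 ∈ S)
    (h₂ : ∀ c ∈ S, c + 2 ∈ S → c + 4 ∉ S)
    (h₃ : ∀ c ∈ S, c + 1 ∈ S ∨ c + 2 ∈ S ∨ c + 3 ∈ S ∨ c + 4 ∈ S)
    (h₄ : ∀ c ∈ S, c + 3 ∈ S → c + 4 ∈ S ∨ c + 5 ∈ S)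
    (h₅ : ∀ c ∈ S, c + 1 ∈ S → c + 3 ∈ S → c + 2 ∈ S) :
    ∃ i, ∀ j, j ∈ S ↔ i = j ∨ (cyc 6).Adj i j := by
  revert S
  decide

namespace IsInducedCycle

variable {V : Type*} {G : SimpleGraph V} {f : ZMod 6 → V} {u v w : V}

theorem adj_one_or_adj_five (hf : IsInducedCycle G f)
    (hClaw : ¬HasInducedCopy G (completeBipartiteGraph (Fin 1) (Fin 3)))
    (hv : ∀ k, v ≠ f k) (h0 : G.Adj v (f 0)) : G.Adj v (f 1) ∨ G.Adj v (f 5) := by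
  by_contra! h
  refine hClaw (hasInducedCopy_claw (hv 1) (hv 5) ?_ h0.symm (hf.adj_iff.mpr (by decide))
    (hf.adj_iff.mpr (by decide)) h.1 h.2 (mt hf.adj_iff.mp (by decide)))
  exact (injective_of_adj_iff cyc_six_neighborSet_injective hf).ne (by decide)

theorem not_adj_four_of_adj_two (hf : IsInducedCycle G f)
    (hClaw : ¬HasInducedCopy G (completeBipartiteGraph (Fin 1) (Fin 3)))
    (h0 : G.Adj v (f 0)) (h2 : G.Adj v (f 2)) : ¬G.Adj v (f 4) := by
  intro h4
  have hinj := injective_of_adj_iff cyc_six_neighborSet_injective hf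
  exact hClaw (hasInducedCopy_claw (hinj.ne (by decide)) (hinj.ne (by decide))
    (hinj.ne (by decide)) h0 h2 h4 (mt hf.adj_iff.mp (by decide)) (mt hf.adj_iff.mp (by decide))
    (mt hf.adj_iff.mp (by decide)))

theorem adj_one_or_two_or_three_or_four (hf : IsInducedCycle G f)
    (hP6 : ¬HasInducedCopy G (pathGraph 6)) (h0 : G.Adj v (f 0)) :
    G.Adj v (f 1) ∨ G.Adj v (f 2) ∨ G.Adj v (f 3) ∨ G.Adj v (f 4) := by
  by_contra! h
  obtain ⟨h1, h2, h3, h4⟩ := h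
  refine hP6 (hasInducedCopy_of_adj_iff pathGraph_six_neighborSet_injective
    ![v, f 0, f 1, f 2, f 3, f 4] fun a b => ?_)
  fin_cases a <;> fin_cases b <;> simp +decide [hf.adj_iff, G.adj_comm _ v, h0, h1, h2, h3, h4]

theorem adj_four_or_five_of_adj_three (hf : IsInducedCycle G f)
    (hC5 : ¬HasInducedCopy G (cyc 5)) (h0 : G.Adj v (f 0)) (h3 : G.Adj v (f 3)) :
    G.Adj v (f 4) ∨ G.Adj v (f 5) := by
  by_contra! h
  obtain ⟨h4, h5⟩ := h
  refine hC5 (hasInducedCopy_of_adj_iff cyc_five_neighborSet_injective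
    ![v, f 0, f 5, f 4, f 3] fun a b => ?_)
  have cases : ∀ k : ZMod 5, k = 0 ∨ k = 1 ∨ k = 2 ∨ k = 3 ∨ k = 4 := by decide
  rcases cases a with rfl | rfl | rfl | rfl | rfl <;>
    rcases cases b with rfl | rfl | rfl | rfl | rfl <;>
    simp +decide [hf.adj_iff, G.adj_comm _ v, h0, h3, h4, h5]

theorem adj_two_of_adj_one_of_adj_three (hf : IsInducedCycle G f)
    (hP5c : ¬HasInducedCopy G (pathGraph 5)ᶜ)
    (h0 : G.Adj v (f 0)) (h1 : G.Adj v (f 1)) (h3 : G.Adj v (f 3)) : G.Adj v (f 2) := by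
  by_contra h2
  refine hP5c (hasInducedCopy_of_adj_iff compl_pathGraph_five_neighborSet_injective
    ![v, f 2, f 0, f 3, f 1] fun a b => ?_)
  fin_cases a <;> fin_cases b <;> simp +decide [hf.adj_iff, G.adj_comm _ v, h0, h1, h2, h3]

theorem exists_isCycClone_of_adj (hf : IsInducedCycle G f)
    (hP6 : ¬HasInducedCopy G (pathGraph 6)) (hC5 : ¬HasInducedCopy G (cyc 5))
    (hP5c : ¬HasInducedCopy G (pathGraph 5)ᶜ)
    (hClaw : ¬HasInducedCopy G (completeBipartiteGraph (Fin 1) (Fin 3)))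
    (hv : ∀ k, v ≠ f k) {j : ZMod 6} (hj : G.Adj v (f j)) : ∃ i, IsCycClone G f v i := by
  classical
  set S := univ.filter fun k => G.Adj v (f k)
  have mem : ∀ k, k ∈ S ↔ G.Adj v (f k) := fun k => by simp [S]
  have at_zero : ∀ c ∈ S, G.Adj v (f (c + 0)) := fun c hc => by simpa using (mem c).1 hc
  obtain ⟨i, hi⟩ := exists_mem_iff_cyc_six_of_forall S ⟨j, (mem j).2 hj⟩
    (fun c hc => by
      simpa only [mem] using (hf.rotate c).adj_one_or_adj_five hClaw (fun _ => hv _) (at_zero c hc))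
    (fun c hc => by
      simpa only [mem] using (hf.rotate c).not_adj_four_of_adj_two hClaw (at_zero c hc))
    (fun c hc => by
      simpa only [mem] using (hf.rotate c).adj_one_or_two_or_three_or_four hP6 (at_zero c hc))
    (fun c hc => by
      simpa only [mem] using (hf.rotate c).adj_four_or_five_of_adj_three hC5 (at_zero c hc))
    (fun c hc => by
      simpa only [mem] using (hf.rotate c).adj_two_of_adj_one_of_adj_three hP5c (at_zero c hc))
  exact ⟨i, fun k => by rw [or_iff_right (hv k), ← mem, hi]⟩

theorem exists_adj_of_adj_isCycClone (hf : IsInducedCycle G f)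
    (hP6 : ¬HasInducedCopy G (pathGraph 6)) {i : ZMod 6}
    (hu : IsCycClone G f u i) (huv : G.Adj u v) : ∃ j, G.Adj v (f j) := by
  by_contra! hv
  have hu₀ : IsCycClone G (fun k => f (i + k)) u 0 := IsCycClone.rotate (by rwa [add_zero])
  refine hP6 (hasInducedCopy_of_adj_iff pathGraph_six_neighborSet_injective
    ![v, u, f (i + 1), f (i + 2), f (i + 3), f (i + 4)] fun a b => ?_)
  fin_cases a <;> fin_cases b <;> simp +decide [(hf.rotate i).adj_iff,
    hu₀.adj_iff_of_ne (hf.rotate i), G.adj_comm (f _) u, G.adj_comm (f _) v, huv, huv.symm, hv]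

theorem exists_isCycClone (hf : IsInducedCycle G f) (hconn : G.Connected)
    (hP6 : ¬HasInducedCopy G (pathGraph 6)) (hC5 : ¬HasInducedCopy G (cyc 5))
    (hP5c : ¬HasInducedCopy G (pathGraph 5)ᶜ)
    (hClaw : ¬HasInducedCopy G (completeBipartiteGraph (Fin 1) (Fin 3))) (v : V) :
    ∃ i, IsCycClone G f v i := by
  have step : ∀ u w, (∃ i, IsCycClone G f u i) → G.Adj u w → ∃ i, IsCycClone G f w i := by
    rintro u w ⟨i, hu⟩ huw
    by_cases hw : ∃ k, w = f k
    · obtain ⟨k, rfl⟩ := hw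
      exact ⟨k, hf.isCycClone_self k⟩
    push Not at hw
    obtain ⟨j, hj⟩ := hf.exists_adj_of_adj_isCycClone hP6 hu huw
    exact hf.exists_isCycClone_of_adj hP6 hC5 hP5c hClaw hw hj
  induction (reachable_iff_reflTransGen (f 0) v).mp (hconn (f 0) v) with
  | refl => exact ⟨0, hf.isCycClone_self 0⟩
  | tail _ huw ih => exact step _ _ ih huw

theorem adj_of_isCycClone_zero_zero (hf : IsInducedCycle G f)
    (hClaw : ¬HasInducedCopy G (completeBipartiteGraph (Fin 1) (Fin 3)))
    (hu : IsCycClone G f u 0) (hw : IsCycClone G f w 0) (huw : u ≠ w) : G.Adj u w := by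
  by_contra h
  exact hClaw (hasInducedCopy_claw (x := f 1) (c := f 2) huw (hu.ne (by decide))
    (hw.ne (by decide)) (hu.adj hf (by decide)).symm (hw.adj hf (by decide)).symm
    (hf.adj_iff.mpr (by decide)) h (hu.not_adj (by decide)) (hw.not_adj (by decide)))

theorem adj_of_isCycClone_zero_one (hf : IsInducedCycle G f)
    (hP6 : ¬HasInducedCopy G (pathGraph 6))
    (hu : IsCycClone G f u 0) (hw : IsCycClone G f w 1) : G.Adj u w := by
  by_contra h
  refine hP6 (hasInducedCopy_of_adj_iff pathGraph_six_neighborSet_injective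
    ![w, f 2, f 3, f 4, f 5, u] fun a b => ?_)
  fin_cases a <;> fin_cases b <;> simp +decide [hf.adj_iff, hu.adj_iff_of_ne hf,
    hw.adj_iff_of_ne hf, G.adj_comm (f _) u, G.adj_comm (f _) w, G.adj_comm w u, h]

theorem not_adj_of_isCycClone_zero_two (hf : IsInducedCycle G f)
    (hC5 : ¬HasInducedCopy G (cyc 5))
    (hu : IsCycClone G f u 0) (hw : IsCycClone G f w 2) : ¬G.Adj u w := by
  intro h
  refine hC5 (hasInducedCopy_of_adj_iff cyc_five_neighborSet_injective
    ![u, w, f 3, f 4, f 5] fun a b => ?_)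
  have cases : ∀ k : ZMod 5, k = 0 ∨ k = 1 ∨ k = 2 ∨ k = 3 ∨ k = 4 := by decide
  rcases cases a with rfl | rfl | rfl | rfl | rfl <;>
    rcases cases b with rfl | rfl | rfl | rfl | rfl <;>
    simp +decide [hf.adj_iff, hu.adj_iff_of_ne hf, hw.adj_iff_of_ne hf, G.adj_comm (f _) u,
      G.adj_comm (f _) w, G.adj_comm w u, h]

theorem not_adj_of_isCycClone_zero_three (hf : IsInducedCycle G f)
    (hClaw : ¬HasInducedCopy G (completeBipartiteGraph (Fin 1) (Fin 3)))
    (hu : IsCycClone G f u 0) (hw : IsCycClone G f w 3) : ¬G.Adj u w := by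
  intro h
  have hinj := injective_of_adj_iff cyc_six_neighborSet_injective hf
  exact hClaw (hasInducedCopy_claw (b := f 1) (c := f 5) (hw.ne (by decide)) (hw.ne (by decide))
    (hinj.ne (by decide)) h (hu.adj hf (by decide)) (hu.adj hf (by decide))
    (hw.not_adj (by decide)) (hw.not_adj (by decide)) (mt hf.adj_iff.mp (by decide)))

theorem adj_iff_of_isCycClone_zero (hf : IsInducedCycle G f)
    (hP6 : ¬HasInducedCopy G (pathGraph 6)) (hC5 : ¬HasInducedCopy G (cyc 5))
    (hClaw : ¬HasInducedCopy G (completeBipartiteGraph (Fin 1) (Fin 3)))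
    {d : ZMod 6} (hu : IsCycClone G f u 0) (hw : IsCycClone G f w d) :
    G.Adj u w ↔ (0 = d ∧ u ≠ w) ∨ (cyc 6).Adj 0 d := by
  have cases : ∀ k : ZMod 6, k = 0 ∨ k = 1 ∨ k = 2 ∨ k = 3 ∨ k = 4 ∨ k = 5 := by decide
  rcases cases d with rfl | rfl | rfl | rfl | rfl | rfl
  · refine ⟨fun h => Or.inl ⟨rfl, h.ne⟩, ?_⟩
    rintro (⟨-, huw⟩ | h)
    exacts [hf.adj_of_isCycClone_zero_zero hClaw hu hw huw, absurd h (by decide)]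
  · exact iff_of_true (hf.adj_of_isCycClone_zero_one hP6 hu hw) (Or.inr (by decide))
  · exact iff_of_false (hf.not_adj_of_isCycClone_zero_two hC5 hu hw) (by simp +decide)
  · exact iff_of_false (hf.not_adj_of_isCycClone_zero_three hClaw hu hw) (by simp +decide)
  -- Rotating by `d` makes `w` a clone of `0` and `u` one of `6 - d` (`d + (6 - d)` reduces to `0`).
  · refine iff_of_false (fun h => ?_) (by simp +decide)
    exact (hf.rotate 4).not_adj_of_isCycClone_zero_two hC5
      (IsCycClone.rotate (c := 4) hw) (IsCycClone.rotate (i := 2) hu) h.symm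
  · exact iff_of_true ((hf.rotate 5).adj_of_isCycClone_zero_one hP6
      (IsCycClone.rotate (c := 5) hw) (IsCycClone.rotate (i := 1) hu)).symm (Or.inr (by decide))

theorem adj_iff_of_isCycClone (hf : IsInducedCycle G f)
    (hP6 : ¬HasInducedCopy G (pathGraph 6)) (hC5 : ¬HasInducedCopy G (cyc 5))
    (hClaw : ¬HasInducedCopy G (completeBipartiteGraph (Fin 1) (Fin 3)))
    {a b : ZMod 6} (hu : IsCycClone G f u a) (hw : IsCycClone G f w b) :
    G.Adj u w ↔ (a = b ∧ u ≠ w) ∨ (cyc 6).Adj a b := by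
  rw [(hf.rotate a).adj_iff_of_isCycClone_zero hP6 hC5 hClaw (d := b - a)
    (IsCycClone.rotate (by rwa [add_zero])) (IsCycClone.rotate (by rwa [add_sub_cancel])),
    ← cyc_adj_add_left a, add_zero, add_sub_cancel, eq_comm, sub_eq_zero, eq_comm (a := b)]

end IsInducedCycle

theorem nonempty_iso_compExp {V : Type*} [Fintype V] {G : SimpleGraph V} {n : ℕ}
    (σ : V → ZMod n) (h : ∀ u w, G.Adj u w ↔ (σ u = σ w ∧ u ≠ w) ∨ (cyc n).Adj (σ u) (σ w)) :
    Nonempty (G ≃g compExp n fun i => Fintype.card {v // σ v = i}) := by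
  let e : V ≃ Σ i, Fin (Fintype.card {v // σ v = i}) :=
    (Equiv.sigmaFiberEquiv σ).symm.trans (Equiv.sigmaCongrRight fun i => Fintype.equivFin _)
  refine ⟨⟨e, fun {u w} => ?_⟩⟩
  change (σ u = σ w ∧ e u ≠ e w) ∨ (cyc n).Adj (σ u) (σ w) ↔ G.Adj u w
  rw [h, e.injective.ne_iff]

theorem stmt_9 {V : Type*} [Fintype V] (G : SimpleGraph V) (hconn : G.Connected)
    (hP6 : ¬ HasInducedCopy G (pathGraph 6))
    (hC5 : ¬ HasInducedCopy G (cyc 5))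
    (hP5c : ¬ HasInducedCopy G (pathGraph 5)ᶜ)
    (hClaw : ¬ HasInducedCopy G (completeBipartiteGraph (Fin 1) (Fin 3)))
    (hC6 : HasInducedCopy G (cyc 6)) :
    ∃ m : ZMod 6 → ℕ, (∀ i, 0 < m i) ∧ Nonempty (G ≃g compExp 6 m) := by
  obtain ⟨f, hf⟩ := hC6
  have hf : IsInducedCycle G f := hf
  choose σ hσ using hf.exists_isCycClone hconn hP6 hC5 hP5c hClaw
  refine ⟨_, fun i => Fintype.card_pos_iff.mpr ⟨⟨f i, (hσ (f i)).unique (hf.isCycClone_self i)⟩⟩,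
    nonempty_iso_compExp σ fun u w => hf.adj_iff_of_isCycClone hP6 hC5 hClaw (hσ u) (hσ w)⟩
end
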